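/- Let α ∈ (0,1), β ∈ (α,1], and ν ∈ ℕ with 2ν > 1/(1-α). Then for every x ∈ ℝ and m ∈ ℕ, |K_{α,ν}(x + t_m(x)) - K_{α,ν}(x)| / |t_m(x)|^β ≥ K(m,ν,α,β), where K(m,ν,α,β) := 2^{β-1} ((2^{2ν(1-α)} - 2)/(2^{2ν(1-α)} - 1)) (2^{2ν(β-α)})^m. -/

import Mathlib

/-!
Write `q = 2^{2ν(1-α)}`, which exceeds `2` because `2ν(1-α) > 1`. In the series for
`K(x + t_m) - K(x)` the terms of index `k > m` vanish: `2^{2νk} t_m` is an even integer and `φ` has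
period `2`. The sign of `t_m` keeps `2^{2νm}x` and `2^{2νm}(x + t_m)` in one interval `[n, n + 1]`,
on which `φ` is affine of slope `±1`, so the term of index `m` has modulus `|t_m| q^m`. Since `φ` is
`1`-Lipschitz, the term of index `k < m` has modulus at most `|t_m| q^k`, and these sum to less than
`|t_m| q^m / (q - 1)`. Hence `|K(x + t_m) - K(x)| ≥ |t_m| q^m (q - 2)/(q - 1)`, which is the claim
after dividing by `|t_m|^β`.
-/

/-- The sawtooth function: φ(x) = |x| on [-1,1], extended 2-periodically. -/
noncomputable def phi (x : ℝ) : ℝ := |x - 2 * round (x / 2)|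

/-- The Knopp-type function K_{α,ν}. -/
noncomputable def Kfun (α : ℝ) (ν : ℕ) (x : ℝ) : ℝ :=
  ∑' k : ℕ, (2 : ℝ) ^ (-(2 * α * (ν : ℝ) * (k : ℝ))) * phi ((2 : ℝ) ^ (2 * ν * k) * x)

/-- The step function t_m: +2^{-2νm-1} if fract(2^{2νm}x) ∈ (0,1/2], else -2^{-2νm-1}. -/
noncomputable def tstep (ν m : ℕ) (x : ℝ) : ℝ :=
  if Int.fract ((2 : ℝ) ^ (2 * ν * m) * x) ∈ Set.Ioc (0 : ℝ) (1 / 2)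
  then (2 : ℝ) ^ (-(2 * (ν : ℤ) * (m : ℤ) + 1))
  else -(2 : ℝ) ^ (-(2 * (ν : ℤ) * (m : ℤ) + 1))

open Set Finset

lemma phi_eq_two_mul_abs_sub_round (x : ℝ) : phi x = 2 * |x / 2 - round (x / 2)| := by
  rw [phi, ← abs_two, ← abs_mul, abs_two]; ring_nf

lemma phi_nonneg (x : ℝ) : 0 ≤ phi x := abs_nonneg _

lemma phi_le_one (x : ℝ) : phi x ≤ 1 := by
  rw [phi_eq_two_mul_abs_sub_round]; linarith [abs_sub_round (x / 2)]

lemma phi_le_abs_sub_two_mul (x : ℝ) (n : ℤ) : phi x ≤ |x - 2 * n| := by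
  have h : |x - 2 * n| = 2 * |x / 2 - n| := by
    rw [← abs_two, ← abs_mul, abs_two]; ring_nf
  rw [phi_eq_two_mul_abs_sub_round, h]
  linarith [round_le (x / 2) n]

lemma phi_eq_abs_sub_two_mul {x : ℝ} {n : ℤ} (h : |x - 2 * n| ≤ 1) : phi x = |x - 2 * n| := by
  refine (phi_le_abs_sub_two_mul x n).antisymm ?_
  obtain hr | hr := eq_or_ne (round (x / 2)) n
  · rw [phi, hr]
  · have h2 : (2 : ℝ) ≤ |2 * (n : ℝ) - 2 * round (x / 2)| := by
      have : (1 : ℤ) ≤ |n - round (x / 2)| := Int.one_le_abs (sub_ne_zero.mpr hr.symm)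
      have : (1 : ℝ) ≤ |(n : ℝ) - round (x / 2)| := by exact_mod_cast this
      rw [← mul_sub, abs_mul, abs_two]; linarith
    have := abs_sub_le (2 * (n : ℝ)) x (2 * round (x / 2))
    rw [abs_sub_comm (2 * (n : ℝ)) x] at this
    rw [phi]; linarith

lemma phi_periodic : Function.Periodic phi 2 := by
  intro x
  rw [phi, phi, add_div, div_self two_ne_zero, ← Int.cast_one, round_add_intCast]
  push_cast; ring_nf

lemma abs_phi_sub_phi_le (a b : ℝ) : |phi a - phi b| ≤ |a - b| := by
  rw [abs_sub_le_iff]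
  constructor
  · calc phi a - phi b ≤ |a - 2 * round (b / 2)| - |b - 2 * round (b / 2)| :=
          sub_le_sub_right (phi_le_abs_sub_two_mul a _) _
      _ ≤ |a - b| := by
          have := abs_sub_abs_le_abs_sub (a - 2 * round (b / 2)) (b - 2 * round (b / 2))
          rwa [sub_sub_sub_cancel_right] at this
  · calc phi b - phi a ≤ |b - 2 * round (a / 2)| - |a - 2 * round (a / 2)| :=
          sub_le_sub_right (phi_le_abs_sub_two_mul b _) _
      _ ≤ |b - a| := by
          have := abs_sub_abs_le_abs_sub (b - 2 * round (a / 2)) (a - 2 * round (a / 2))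
          rwa [sub_sub_sub_cancel_right] at this
      _ = |a - b| := abs_sub_comm _ _

lemma abs_phi_sub_phi_of_mem_Icc {a b : ℝ} (n : ℤ) (ha : a ∈ Icc (n : ℝ) (n + 1))
    (hb : b ∈ Icc (n : ℝ) (n + 1)) : |phi a - phi b| = |a - b| := by
  obtain ⟨k, rfl | rfl⟩ := Int.even_or_odd' n
  · push_cast at ha hb
    have hpa : phi a = a - 2 * k := by
      rw [phi_eq_abs_sub_two_mul] <;> rw [abs_of_nonneg] <;> linarith [ha.1, ha.2]
    have hpb : phi b = b - 2 * k := by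
      rw [phi_eq_abs_sub_two_mul] <;> rw [abs_of_nonneg] <;> linarith [hb.1, hb.2]
    rw [hpa, hpb, sub_sub_sub_cancel_right]
  · push_cast at ha hb
    have hpa : phi a = -(a - 2 * ((k + 1 : ℤ) : ℝ)) := by
      rw [phi_eq_abs_sub_two_mul] <;> rw [abs_of_nonpos] <;> push_cast <;> linarith [ha.1, ha.2]
    have hpb : phi b = -(b - 2 * ((k + 1 : ℤ) : ℝ)) := by
      rw [phi_eq_abs_sub_two_mul] <;> rw [abs_of_nonpos] <;> push_cast <;> linarith [hb.1, hb.2]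
    rw [hpa, hpb, ← abs_sub_comm, neg_sub_neg, sub_sub_sub_cancel_right]

lemma abs_phi_add_signed_half_sub_phi (y : ℝ) :
    |phi (y + if Int.fract y ∈ Ioc (0 : ℝ) (1 / 2) then 1 / 2 else -(1 / 2)) - phi y| = 1 / 2 := by
  split_ifs with h
  · have hy := Int.floor_add_fract y
    rw [abs_phi_sub_phi_of_mem_Icc ⌊y⌋] <;> [norm_num; constructor; constructor] <;>
      linarith [h.1, h.2, Int.fract_nonneg y]
  · have hceil : (⌈y⌉ : ℝ) ≤ y + 1 / 2 := by
      rcases Int.fract_eq_zero_or_add_one_sub_ceil y with h0 | h0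
      · have hy : y = ⌊y⌋ := by linarith [Int.floor_add_fract y]
        rw [hy, Int.ceil_intCast]; linarith
      · rw [Set.mem_Ioc, not_and_or, not_lt, not_le] at h
        rcases h with h | h <;> linarith [Int.fract_nonneg y, Int.ceil_lt_add_one y]
    rw [abs_phi_sub_phi_of_mem_Icc (⌈y⌉ - 1)] <;> [norm_num; constructor; constructor] <;>
      push_cast <;> linarith [Int.le_ceil y, Int.ceil_lt_add_one y]

lemma two_rpow_neg_mul_two_pow (α : ℝ) (ν k : ℕ) :
    (2 : ℝ) ^ (-(2 * α * ν * k)) * 2 ^ (2 * ν * k) = ((2 : ℝ) ^ (2 * ν * (1 - α))) ^ k := by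
  rw [← Real.rpow_natCast 2 (2 * ν * k), ← Real.rpow_add two_pos, ← Real.rpow_natCast _ k,
    ← Real.rpow_mul zero_le_two]
  push_cast; ring_nf

lemma summable_Kfun_terms {α : ℝ} {ν : ℕ} (hα : 0 < α) (hν : 0 < ν) (x : ℝ) :
    Summable fun k : ℕ => (2 : ℝ) ^ (-(2 * α * ν * k)) * phi ((2 : ℝ) ^ (2 * ν * k) * x) := by
  have hν' : (0 : ℝ) < ν := by exact_mod_cast hν
  have hr : (2 : ℝ) ^ (-(2 * α * ν)) < 1 :=
    Real.rpow_lt_one_of_one_lt_of_neg one_lt_two (by nlinarith)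
  refine Summable.of_nonneg_of_le (fun k => mul_nonneg (by positivity) (phi_nonneg _)) (fun k => ?_)
    (summable_geometric_of_lt_one (by positivity) hr)
  rw [← Real.rpow_natCast (2 ^ _), ← Real.rpow_mul zero_le_two,
    show -(2 * α * ν) * k = -(2 * α * ν * k) by ring]
  exact mul_le_of_le_one_right (by positivity) (phi_le_one _)

lemma abs_tstep (ν m : ℕ) (x : ℝ) : |tstep ν m x| = (2 : ℝ) ^ (-(2 * (ν : ℤ) * m + 1)) := by
  have := zpow_pos (two_pos (α := ℝ)) (-(2 * (ν : ℤ) * m + 1))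
  unfold tstep; split_ifs <;> simp only [abs_neg, abs_of_pos this]

lemma two_pow_mul_zpow_neg (ν m : ℕ) :
    (2 : ℝ) ^ (2 * ν * m) * 2 ^ (-(2 * (ν : ℤ) * m + 1)) = 1 / 2 := by
  rw [← zpow_natCast, ← zpow_add₀ two_ne_zero]; push_cast; ring_nf; norm_num

lemma two_pow_mul_tstep (ν m : ℕ) (x : ℝ) :
    (2 : ℝ) ^ (2 * ν * m) * tstep ν m x =
      if Int.fract ((2 : ℝ) ^ (2 * ν * m) * x) ∈ Ioc (0 : ℝ) (1 / 2) then 1 / 2 else -(1 / 2) := by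
  unfold tstep; split_ifs <;> simp only [mul_neg, two_pow_mul_zpow_neg]

lemma exists_two_pow_mul_tstep_eq_int_mul_two {ν m k : ℕ} (hν : 0 < ν) (hk : m < k) (x : ℝ) :
    ∃ n : ℤ, (2 : ℝ) ^ (2 * ν * k) * tstep ν m x = n * 2 := by
  obtain ⟨j, hj⟩ : ∃ j, 2 * ν * k = 2 * ν * m + 2 + j := ⟨2 * ν * k - (2 * ν * m + 2), by
    have : 2 * ν * m + 2 ≤ 2 * ν * k := by nlinarith
    omega⟩
  have h : (2 : ℝ) ^ (2 * ν * k) * 2 ^ (-(2 * (ν : ℤ) * m + 1)) = (2 ^ j : ℤ) * 2 := by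
    rw [hj, pow_add, pow_add, mul_comm, ← mul_assoc, ← mul_assoc,
      mul_comm _ ((2 : ℝ) ^ (2 * ν * m)), two_pow_mul_zpow_neg]
    push_cast; ring
  unfold tstep
  split_ifs
  · exact ⟨2 ^ j, h⟩
  · exact ⟨-2 ^ j, by rw [mul_neg, h]; push_cast; ring⟩

lemma Kfun_add_tstep_sub_eq_sum {α : ℝ} {ν : ℕ} (hα : 0 < α) (hν : 0 < ν) (x : ℝ) (m : ℕ) :
    Kfun α ν (x + tstep ν m x) - Kfun α ν x = ∑ k ∈ range (m + 1), (2 : ℝ) ^ (-(2 * α * ν * k)) *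
      (phi ((2 : ℝ) ^ (2 * ν * k) * (x + tstep ν m x)) - phi ((2 : ℝ) ^ (2 * ν * k) * x)) := by
  rw [Kfun, Kfun, ← (summable_Kfun_terms hα hν _).tsum_sub (summable_Kfun_terms hα hν x)]
  refine (tsum_eq_sum fun k hk => ?_).trans (sum_congr rfl fun k _ => by ring)
  obtain ⟨n, hn⟩ := exists_two_pow_mul_tstep_eq_int_mul_two hν (by simpa using hk) x
  rw [mul_add, hn, phi_periodic.int_mul n, sub_self]

lemma mul_pow_mul_le_abs_sum_range_succ {F : ℕ → ℝ} {T q : ℝ} {m : ℕ} (hT : 0 ≤ T) (hq : 1 < q)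
    (hF : ∀ k < m, |F k| ≤ T * q ^ k) (hFm : |F m| = T * q ^ m) :
    T * q ^ m * ((q - 2) / (q - 1)) ≤ |∑ k ∈ range (m + 1), F k| := by
  have hq1 : 0 < q - 1 := by linarith
  have hhead : |∑ k ∈ range m, F k| ≤ T * ((q ^ m - 1) / (q - 1)) :=
    calc |∑ k ∈ range m, F k| ≤ ∑ k ∈ range m, T * q ^ k :=
          (abs_sum_le_sum_abs _ _).trans (sum_le_sum fun k hk => hF k (mem_range.mp hk))
      _ = T * ((q ^ m - 1) / (q - 1)) := by rw [← mul_sum, geom_sum_eq hq.ne']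
  have hgap : T * q ^ m * ((q - 2) / (q - 1)) + T / (q - 1) =
      T * q ^ m - T * ((q ^ m - 1) / (q - 1)) := by
    field_simp; ring
  rw [sum_range_succ]
  have := abs_sub_abs_le_abs_sub (F m) (-∑ k ∈ range m, F k)
  rw [abs_neg, sub_neg_eq_add, add_comm] at this
  linarith [div_nonneg hT hq1.le]

lemma abs_Kfun_add_tstep_sub_ge {α : ℝ} {ν : ℕ} (hα : α ∈ Ioo (0 : ℝ) 1)
    (hν : 1 / (1 - α) < 2 * (ν : ℝ)) (x : ℝ) (m : ℕ) :
    |tstep ν m x| * ((2 : ℝ) ^ (2 * ν * (1 - α))) ^ m *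
        (((2 : ℝ) ^ (2 * ν * (1 - α)) - 2) / ((2 : ℝ) ^ (2 * ν * (1 - α)) - 1)) ≤
      |Kfun α ν (x + tstep ν m x) - Kfun α ν x| := by
  obtain ⟨hα0, hα1⟩ := hα
  have hexp : 1 < 2 * (ν : ℝ) * (1 - α) := by
    rwa [div_lt_iff₀ (by linarith)] at hν
  have hν0 : 0 < ν := Nat.pos_of_ne_zero (by rintro rfl; norm_num at hexp)
  have hq : (2 : ℝ) < 2 ^ (2 * ν * (1 - α)) := by
    simpa using Real.rpow_lt_rpow_of_exponent_lt one_lt_two hexp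
  rw [Kfun_add_tstep_sub_eq_sum hα0 hν0]
  refine mul_pow_mul_le_abs_sum_range_succ (abs_nonneg _) (by linarith) (fun k _ => ?_) ?_
  · rw [abs_mul, abs_of_pos (by positivity)]
    calc (2 : ℝ) ^ (-(2 * α * ν * k)) *
          |phi ((2 : ℝ) ^ (2 * ν * k) * (x + tstep ν m x)) - phi ((2 : ℝ) ^ (2 * ν * k) * x)|
        ≤ (2 : ℝ) ^ (-(2 * α * ν * k)) * ((2 : ℝ) ^ (2 * ν * k) * |tstep ν m x|) := by
          gcongr
          refine (abs_phi_sub_phi_le _ _).trans_eq ?_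
          rw [← mul_sub, add_sub_cancel_left, abs_mul, abs_of_pos (by positivity)]
      _ = |tstep ν m x| * ((2 : ℝ) ^ (2 * ν * (1 - α))) ^ k := by
          rw [← two_rpow_neg_mul_two_pow]; ring
  · rw [abs_mul, abs_of_pos (by positivity), mul_add, two_pow_mul_tstep,
      abs_phi_add_signed_half_sub_phi, ← two_rpow_neg_mul_two_pow, abs_tstep,
      ← two_pow_mul_zpow_neg ν m]
    ring

lemma two_rpow_mul_pow_mul_abs_tstep_rpow (α β : ℝ) (ν m : ℕ) (x : ℝ) :
    (2 : ℝ) ^ (β - 1) * ((2 : ℝ) ^ (2 * ν * (β - α))) ^ m * |tstep ν m x| ^ β =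
      |tstep ν m x| * ((2 : ℝ) ^ (2 * ν * (1 - α))) ^ m := by
  rw [abs_tstep, ← Real.rpow_intCast, ← Real.rpow_natCast _ m, ← Real.rpow_natCast _ m,
    ← Real.rpow_mul zero_le_two, ← Real.rpow_mul zero_le_two, ← Real.rpow_mul zero_le_two,
    ← Real.rpow_add two_pos, ← Real.rpow_add two_pos, ← Real.rpow_add two_pos]
  push_cast; ring_nf

theorem Kfun_beta_quotient_lower_bound_general (α β : ℝ) (ν : ℕ)
    (hα : α ∈ Set.Ioo (0 : ℝ) 1) (hν : 1 / (1 - α) < 2 * (ν : ℝ))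
    (x : ℝ) (m : ℕ) :
    |Kfun α ν (x + tstep ν m x) - Kfun α ν x| / |tstep ν m x| ^ β ≥
      (2 : ℝ) ^ (β - 1)
        * (((2 : ℝ) ^ (2 * (ν : ℝ) * (1 - α)) - 2) / ((2 : ℝ) ^ (2 * (ν : ℝ) * (1 - α)) - 1))
        * ((2 : ℝ) ^ (2 * (ν : ℝ) * (β - α))) ^ m := by
  have ht : 0 < |tstep ν m x| := by rw [abs_tstep]; positivity
  rw [ge_iff_le, le_div_iff₀ (Real.rpow_pos_of_pos ht β)]
  calc _ = (2 : ℝ) ^ (β - 1) * ((2 : ℝ) ^ (2 * ν * (β - α))) ^ m * |tstep ν m x| ^ β *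
          (((2 : ℝ) ^ (2 * ν * (1 - α)) - 2) / ((2 : ℝ) ^ (2 * ν * (1 - α)) - 1)) := by ring
    _ ≤ _ := by
      rw [two_rpow_mul_pow_mul_abs_tstep_rpow]
      exact abs_Kfun_add_tstep_sub_ge hα hν x m

theorem Kfun_beta_quotient_lower_bound (α β : ℝ) (ν : ℕ)
    (hα : α ∈ Set.Ioo (0 : ℝ) 1) (hβ : β ∈ Set.Ioc α 1) (hν : 1 / (1 - α) < 2 * (ν : ℝ))
    (x : ℝ) (m : ℕ) :
    |Kfun α ν (x + tstep ν m x) - Kfun α ν x| / |tstep ν m x| ^ β ≥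
      (2 : ℝ) ^ (β - 1)
        * (((2 : ℝ) ^ (2 * (ν : ℝ) * (1 - α)) - 2) / ((2 : ℝ) ^ (2 * (ν : ℝ) * (1 - α)) - 1))
        * ((2 : ℝ) ^ (2 * (ν : ℝ) * (β - α))) ^ m :=
  Kfun_beta_quotient_lower_bound_general α β ν hα hν x m
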